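/- arXiv:2509.13923 — 3 statements merged into one kernel-verified Lean document; each statement's English description precedes it below -/
import Mathlib

section
/- Let n, T ≥ 1, let Σ be a deterministic symmetric positive semidefinite n×n real matrix with positive semidefinite square root √Σ, and let X be the n×T random matrix whose T columns are i.i.d. copies of a rotationally invariant random vector ξ in ℝⁿ satisfying E[ξξᵀ] = Iₙ and E[‖ξ‖⁴] < ∞. Define E = (1/T)·√Σ X Xᵀ √Σ and γ = E[‖ξ‖⁴]/(n(n+2)). Then E[τ(E²)] = ((T−1)/T + 2γ/T)·τ(Σ²) + (nγ/T)·τ(Σ)², where τ(A) = (1/n)Tr(A) is the normalized trace. -/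
/-!
Expanding the trace, `n T² τ(E²) = ∑ₛ ∑ₜ (xₛᵀ Σ xₜ)²` over the columns `xₜ` of `X`. For `s ≠ t`,
independence and `E[ξξᵀ] = I` give `E (xₛᵀ Σ xₜ)² = Tr(Σ²)`. For `s = t`, write `Σ = U D Uᵀ` with
`U` orthogonal; rotation invariance removes `U`, leaving `∑ᵢⱼ dᵢdⱼ E ξᵢ²ξⱼ²`. Two reflections, one
swapping the coordinates `i ≠ j` and one mapping `(ξᵢ, ξⱼ)` to `(ξᵢ + ξⱼ, ξᵢ - ξⱼ) / √2`, give
`E ξᵢ⁴ = E ξⱼ⁴` and `E ξᵢ²ξⱼ² = E (ξᵢ² - ξⱼ²)² / 4`, i.e. `E ξᵢ²ξⱼ² = m (1 + 2δᵢⱼ)`. Hence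
`E (ξᵀ Σ ξ)² = m (2 Tr(Σ²) + (Tr Σ)²)`, and the case `Σ = I` identifies `m = E‖ξ‖⁴ / (n (n + 2)) = γ`.
-/

open MeasureTheory ProbabilityTheory Matrix

noncomputable def tau (n : ℕ) (A : Matrix (Fin n) (Fin n) ℝ) : ℝ := (1 / (n : ℝ)) * A.trace

section

variable {ι : Type*} [Fintype ι] [DecidableEq ι]

namespace Matrix

noncomputable def householder (w : ι → ℝ) : Matrix ι ι ℝ := 1 - (2 / (w ⬝ᵥ w)) • vecMulVec w w

theorem householder_mulVec (w v : ι → ℝ) :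
    householder w *ᵥ v = v - (2 / (w ⬝ᵥ w) * (w ⬝ᵥ v)) • w := by
  simp [householder, sub_mulVec, smul_mulVec, vecMulVec_mulVec, smul_smul]

theorem householder_smul_single_sub_single_mulVec {i j : ι} (hij : i ≠ j) (a : ℝ) (v : ι → ℝ) :
    (householder (a • Pi.single i 1 - Pi.single j 1) *ᵥ v) i =
        v i - 2 * a * (a * v i - v j) / (a ^ 2 + 1) ∧
      (householder (a • Pi.single i 1 - Pi.single j 1) *ᵥ v) j =
        v j + 2 * (a * v i - v j) / (a ^ 2 + 1) := by
  simp only [householder_mulVec, dotProduct_sub, dotProduct_smul, dotProduct_single, Pi.sub_apply,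
    Pi.smul_apply, Pi.single_eq_same, smul_eq_mul, mul_one, ne_eq, hij, not_false_eq_true,
    Pi.single_eq_of_ne, sub_zero, hij.symm, mul_zero, zero_sub, sub_neg_eq_add, sub_dotProduct,
    smul_dotProduct, single_dotProduct, one_mul, sub_right_inj, mul_neg, add_right_inj]
  constructor <;> ring

theorem transpose_householder_mul_self (w : ι → ℝ) : (householder w)ᵀ * householder w = 1 := by
  have hc : 2 / (w ⬝ᵥ w) * (2 / (w ⬝ᵥ w)) * (w ⬝ᵥ w) = 2 * (2 / (w ⬝ᵥ w)) := by
    rcases eq_or_ne (w ⬝ᵥ w) 0 with h | h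
    · simp [h]
    · field_simp
  have hsq : vecMulVec w w * vecMulVec w w = (w ⬝ᵥ w) • vecMulVec w w := by
    rw [vecMulVec_mul_vecMulVec, vecMulVec_smul]
  simp only [householder, transpose_sub, transpose_one, transpose_smul, transpose_vecMulVec,
    sub_mul, mul_sub, one_mul, mul_one, Matrix.smul_mul, Matrix.mul_smul, hsq, smul_smul]
  match_scalars
  · rfl
  · linear_combination hc

theorem IsHermitian.exists_eq_mul_diagonal_mul_transpose {S : Matrix ι ι ℝ} (hS : S.IsHermitian) :
    ∃ U : Matrix ι ι ℝ, ∃ d : ι → ℝ, Uᵀ * U = 1 ∧ U * Uᵀ = 1 ∧ S = U * diagonal d * Uᵀ := by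
  refine ⟨hS.eigenvectorUnitary, hS.eigenvalues, ?_, ?_, ?_⟩
  · simpa [star_eq_conjTranspose] using mem_unitaryGroup_iff'.1 hS.eigenvectorUnitary.2
  · simpa [star_eq_conjTranspose] using mem_unitaryGroup_iff.1 hS.eigenvectorUnitary.2
  · conv_lhs => rw [hS.spectral_theorem]
    simp [star_eq_conjTranspose]

omit [DecidableEq ι] in
theorem trace_mul_transpose_self {κ : Type*} [Fintype κ] (A : Matrix ι κ ℝ) :
    (A * Aᵀ).trace = ∑ i, ∑ j, A i j ^ 2 := by
  simp [trace, mul_apply, sq]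

omit [DecidableEq ι] in
theorem trace_sq_eq_sum_sq_dotProduct_mulVec {κ : Type*} [Fintype κ] {R S : Matrix ι ι ℝ}
    (hRS : R * R = S) (hS : Sᵀ = S) (X : Matrix ι κ ℝ) :
    (R * X * Xᵀ * R * (R * X * Xᵀ * R)).trace = ∑ s, ∑ t, (Xᵀ s ⬝ᵥ S *ᵥ Xᵀ t) ^ 2 := by
  have hG : (Xᵀ * S * X)ᵀ = Xᵀ * S * X := by
    rw [transpose_mul, transpose_mul, transpose_transpose, hS, Matrix.mul_assoc]
  calc (R * X * Xᵀ * R * (R * X * Xᵀ * R)).trace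
      = ((R * X) * (Xᵀ * S * X * Xᵀ * R)).trace := by
        rw [← hRS]; simp only [Matrix.mul_assoc]
    _ = ((Xᵀ * S * X * Xᵀ * R) * (R * X)).trace := trace_mul_comm _ _
    _ = ((Xᵀ * S * X) * (Xᵀ * S * X)ᵀ).trace := by
        rw [hG, ← hRS]; simp only [Matrix.mul_assoc]
    _ = ∑ s, ∑ t, (Xᵀ s ⬝ᵥ S *ᵥ Xᵀ t) ^ 2 := by
        rw [trace_mul_transpose_self, Matrix.mul_assoc]
        rfl

end Matrix

section Integrability

variable {Ω : Type*} [MeasurableSpace Ω] {μ : Measure Ω} {ξ : Ω → ι → ℝ}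

omit [DecidableEq ι] in
theorem sq_le_sum_sq (v : ι → ℝ) (i : ι) : v i ^ 2 ≤ ∑ j, v j ^ 2 :=
  Finset.single_le_sum (f := fun j => v j ^ 2) (fun _ _ => sq_nonneg _) (Finset.mem_univ i)

omit [DecidableEq ι] in
theorem abs_mul_le_sum_sq (v : ι → ℝ) (i j : ι) : |v i * v j| ≤ ∑ k, v k ^ 2 := by
  have := two_mul_le_add_sq |v i| |v j|
  rw [sq_abs, sq_abs] at this
  rw [abs_mul]
  linarith [sq_le_sum_sq v i, sq_le_sum_sq v j]

omit [DecidableEq ι] in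
theorem abs_dotProduct_mulVec_self_le (S : Matrix ι ι ℝ) (v : ι → ℝ) :
    |v ⬝ᵥ S *ᵥ v| ≤ (∑ i, ∑ j, |S i j|) * ∑ k, v k ^ 2 := by
  calc |v ⬝ᵥ S *ᵥ v| = |∑ i, ∑ j, S i j * (v i * v j)| := by
        simp only [dotProduct, mulVec, Finset.mul_sum]
        congr 1
        exact Finset.sum_congr rfl fun i _ => Finset.sum_congr rfl fun j _ => by ring
    _ ≤ ∑ i, ∑ j, |S i j * (v i * v j)| :=
        (Finset.abs_sum_le_sum_abs _ _).trans
          (Finset.sum_le_sum fun i _ => Finset.abs_sum_le_sum_abs _ _)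
    _ ≤ ∑ i, ∑ j, |S i j| * ∑ k, v k ^ 2 := by
        gcongr with i _ j _
        rw [abs_mul]
        exact mul_le_mul_of_nonneg_left (abs_mul_le_sum_sq v i j) (abs_nonneg _)
    _ = (∑ i, ∑ j, |S i j|) * ∑ k, v k ^ 2 := by simp only [Finset.sum_mul]

omit [DecidableEq ι] in
theorem integrable_sq_mul_sq (hξ : Measurable ξ)
    (hmom : Integrable (fun ω => (∑ i, ξ ω i ^ 2) ^ 2) μ) (i j : ι) :
    Integrable (fun ω => ξ ω i ^ 2 * ξ ω j ^ 2) μ := by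
  refine hmom.mono' (by fun_prop) (Filter.Eventually.of_forall fun ω => ?_)
  rw [Real.norm_of_nonneg (by positivity), sq (∑ i, _)]
  exact mul_le_mul (sq_le_sum_sq _ i) (sq_le_sum_sq _ j) (sq_nonneg _) (by positivity)

omit [DecidableEq ι] in
theorem integrable_pow_four (hξ : Measurable ξ)
    (hmom : Integrable (fun ω => (∑ i, ξ ω i ^ 2) ^ 2) μ) (i : ι) :
    Integrable (fun ω => ξ ω i ^ 4) μ := by
  simpa only [← pow_add] using integrable_sq_mul_sq hξ hmom i i

omit [DecidableEq ι] in
theorem integrable_mul_apply [IsFiniteMeasure μ] (hξ : Measurable ξ)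
    (hmom : Integrable (fun ω => (∑ i, ξ ω i ^ 2) ^ 2) μ) (i j : ι) :
    Integrable (fun ω => ξ ω i * ξ ω j) μ := by
  have hsum : Integrable (fun ω => ∑ k, ξ ω k ^ 2) μ :=
    ((memLp_two_iff_integrable_sq (by fun_prop)).2 hmom).integrable one_le_two
  exact hsum.mono' (by fun_prop) (Filter.Eventually.of_forall fun ω => abs_mul_le_sum_sq _ i j)

omit [DecidableEq ι] in
theorem integrable_sq_dotProduct_mulVec_self (hξ : Measurable ξ)
    (hmom : Integrable (fun ω => (∑ i, ξ ω i ^ 2) ^ 2) μ) (S : Matrix ι ι ℝ) :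
    Integrable (fun ω => (ξ ω ⬝ᵥ S *ᵥ ξ ω) ^ 2) μ := by
  refine (hmom.const_mul ((∑ i, ∑ j, |S i j|) ^ 2)).mono' (by fun_prop)
    (Filter.Eventually.of_forall fun ω => ?_)
  rw [Real.norm_eq_abs, abs_pow, ← mul_pow]
  exact pow_le_pow_left₀ (abs_nonneg _) (abs_dotProduct_mulVec_self_le S _) 2

end Integrability

def IsRotationInvariant {Ω : Type*} [MeasurableSpace Ω] (ξ : Ω → ι → ℝ) (μ : Measure Ω) : Prop :=
  ∀ O : Matrix ι ι ℝ, Oᵀ * O = 1 → μ.map (fun ω => O *ᵥ ξ ω) = μ.map ξ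

namespace IsRotationInvariant

variable {Ω : Type*} [MeasurableSpace Ω] {μ : Measure Ω} {ξ : Ω → ι → ℝ}

theorem integral_comp_mulVec (h : IsRotationInvariant ξ μ) (hξ : Measurable ξ)
    {O : Matrix ι ι ℝ} (hO : Oᵀ * O = 1) {g : (ι → ℝ) → ℝ} (hg : Measurable g) :
    ∫ ω, g (O *ᵥ ξ ω) ∂μ = ∫ ω, g (ξ ω) ∂μ :=
  (IdentDistrib.comp ⟨by fun_prop, hξ.aemeasurable, h O hO⟩ hg).integral_eq

theorem integral_pow_four_eq (h : IsRotationInvariant ξ μ) (hξ : Measurable ξ) (i j : ι) :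
    ∫ ω, ξ ω i ^ 4 ∂μ = ∫ ω, ξ ω j ^ 4 ∂μ := by
  rcases eq_or_ne i j with rfl | hij
  · rfl
  set w : ι → ℝ := (1 : ℝ) • Pi.single i 1 - Pi.single j 1
  have hswap : ∀ v : ι → ℝ, (householder w *ᵥ v) i = v j := fun v => by
    rw [(householder_smul_single_sub_single_mulVec hij 1 v).1]
    ring
  have := h.integral_comp_mulVec hξ (transpose_householder_mul_self w)
    (g := fun v => v i ^ 4) (by fun_prop)
  simpa only [hswap] using this.symm

theorem three_mul_integral_sq_mul_sq (h : IsRotationInvariant ξ μ) (hξ : Measurable ξ)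
    (hmom : Integrable (fun ω => (∑ i, ξ ω i ^ 2) ^ 2) μ) {i j : ι} (hij : i ≠ j) :
    3 * ∫ ω, ξ ω i ^ 2 * ξ ω j ^ 2 ∂μ = ∫ ω, ξ ω i ^ 4 ∂μ := by
  set s := Real.sqrt 2
  have hs : s ^ 2 = 2 := Real.sq_sqrt zero_le_two
  have hs0 : 0 < s := by positivity
  have hq : (s - 1) ^ 2 + 1 ≠ 0 := by positivity
  -- `w` spans the `(-1)`-eigenline of `[[1, 1], [1, -1]] / √2` in the `(i, j)`-plane
  set w : ι → ℝ := (s - 1) • Pi.single i 1 - Pi.single j 1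
  set H := householder w
  have hHi : ∀ v : ι → ℝ, (H *ᵥ v) i = (v i + v j) / s := fun v => by
    rw [(householder_smul_single_sub_single_mulVec hij _ v).1]
    field_simp
    linear_combination (v i + v j - s * v i) * hs
  have hHj : ∀ v : ι → ℝ, (H *ᵥ v) j = (v i - v j) / s := fun v => by
    rw [(householder_smul_single_sub_single_mulVec hij _ v).2]
    field_simp
    linear_combination (v i - v j + s * v j) * hs
  have hHij : ∀ v : ι → ℝ,
      ((H *ᵥ v) i * (H *ᵥ v) j) ^ 2 = v i ^ 4 / 4 - v i ^ 2 * v j ^ 2 / 2 + v j ^ 4 / 4 := by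
    intro v
    rw [hHi, hHj, div_mul_div_comm, ← sq, hs]
    ring
  have hinv := h.integral_comp_mulVec hξ (O := H) (transpose_householder_mul_self w)
    (g := fun v => (v i * v j) ^ 2) (by fun_prop)
  simp only [hHij] at hinv
  simp only [mul_pow] at hinv
  have hi := integrable_pow_four hξ hmom i
  have hj := integrable_pow_four hξ hmom j
  have hij' := integrable_sq_mul_sq hξ hmom i j
  rw [integral_add (f := fun ω => ξ ω i ^ 4 / 4 - ξ ω i ^ 2 * ξ ω j ^ 2 / 2)
      ((hi.div_const _).sub (hij'.div_const _)) (hj.div_const _),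
    integral_sub (hi.div_const _) (hij'.div_const _), integral_div, integral_div, integral_div,
    h.integral_pow_four_eq hξ j i] at hinv
  linarith

theorem integral_sq_mul_sq (h : IsRotationInvariant ξ μ) (hξ : Measurable ξ)
    (hmom : Integrable (fun ω => (∑ i, ξ ω i ^ 2) ^ 2) μ) (i j k : ι) :
    ∫ ω, ξ ω i ^ 2 * ξ ω j ^ 2 ∂μ = (∫ ω, ξ ω k ^ 4 ∂μ) / 3 * if i = j then 3 else 1 := by
  rw [h.integral_pow_four_eq hξ k i]
  split_ifs with hij
  · simp only [hij, ← pow_add]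
    ring
  · linarith [h.three_mul_integral_sq_mul_sq hξ hmom hij]

theorem integral_sq_dotProduct_diagonal_mulVec (h : IsRotationInvariant ξ μ) (hξ : Measurable ξ)
    (hmom : Integrable (fun ω => (∑ i, ξ ω i ^ 2) ^ 2) μ) (d : ι → ℝ) (k : ι) :
    ∫ ω, (ξ ω ⬝ᵥ diagonal d *ᵥ ξ ω) ^ 2 ∂μ = (∫ ω, ξ ω k ^ 4 ∂μ) / 3 *
      (2 * (diagonal d * diagonal d).trace + (diagonal d).trace ^ 2) := by
  have hexpand : ∀ v : ι → ℝ,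
      (v ⬝ᵥ diagonal d *ᵥ v) ^ 2 = ∑ a, ∑ b, d a * d b * (v a ^ 2 * v b ^ 2) := by
    intro v
    simp only [dotProduct, mulVec_diagonal, sq, Finset.sum_mul_sum]
    exact Finset.sum_congr rfl fun a _ => Finset.sum_congr rfl fun b _ => by ring
  simp only [hexpand]
  rw [integral_finsetSum _ fun a _ => integrable_finsetSum _ fun b _ =>
    (integrable_sq_mul_sq hξ hmom a b).const_mul _]
  simp only [integral_finsetSum _ fun b _ => (integrable_sq_mul_sq hξ hmom _ b).const_mul _,
    integral_const_mul, h.integral_sq_mul_sq hξ hmom _ _ k, diagonal_mul_diagonal, trace_diagonal]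
  set c := (∫ ω, ξ ω k ^ 4 ∂μ) / 3
  calc ∑ a, ∑ b, d a * d b * (c * if a = b then 3 else 1)
      = ∑ a, ∑ b, (c * (d a * d b) + if a = b then 2 * c * (d a * d a) else 0) := by
        refine Finset.sum_congr rfl fun a _ => Finset.sum_congr rfl fun b _ => ?_
        split_ifs with hab
        · subst hab; ring
        · ring
    _ = c * (2 * ∑ i, d i * d i + (∑ i, d i) ^ 2) := by
        simp only [Finset.sum_add_distrib, Finset.sum_ite_eq, Finset.mem_univ, if_true,
          ← Finset.mul_sum, sq, Finset.sum_mul_sum]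
        ring

theorem integral_sq_dotProduct_mulVec_self_eq (h : IsRotationInvariant ξ μ) (hξ : Measurable ξ)
    (hmom : Integrable (fun ω => (∑ i, ξ ω i ^ 2) ^ 2) μ) {S : Matrix ι ι ℝ} (hS : S.IsHermitian)
    (k : ι) :
    ∫ ω, (ξ ω ⬝ᵥ S *ᵥ ξ ω) ^ 2 ∂μ =
      (∫ ω, ξ ω k ^ 4 ∂μ) / 3 * (2 * (S * S).trace + S.trace ^ 2) := by
  obtain ⟨U, d, hUU, hUU', rfl⟩ := hS.exists_eq_mul_diagonal_mul_transpose
  have hquad : ∀ v : ι → ℝ,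
      v ⬝ᵥ (U * diagonal d * Uᵀ) *ᵥ v = (Uᵀ *ᵥ v) ⬝ᵥ diagonal d *ᵥ (Uᵀ *ᵥ v) := by
    intro v
    rw [← mulVec_mulVec, ← mulVec_mulVec, dotProduct_mulVec, mulVec_transpose]
  have hsq : U * diagonal d * Uᵀ * (U * diagonal d * Uᵀ) = U * (diagonal d * diagonal d) * Uᵀ := by
    simp only [Matrix.mul_assoc]
    rw [← Matrix.mul_assoc Uᵀ U, hUU, Matrix.one_mul]
  have htrace : ∀ A : Matrix ι ι ℝ, (U * A * Uᵀ).trace = A.trace := fun A => by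
    rw [trace_mul_comm, ← Matrix.mul_assoc, hUU, Matrix.one_mul]
  simp only [hquad]
  rw [h.integral_comp_mulVec hξ (O := Uᵀ) (by rw [transpose_transpose, hUU'])
      (g := fun v => (v ⬝ᵥ diagonal d *ᵥ v) ^ 2) (by fun_prop),
    h.integral_sq_dotProduct_diagonal_mulVec hξ hmom d k, hsq, htrace, htrace]

theorem integral_sq_dotProduct_mulVec_self [Nonempty ι] (h : IsRotationInvariant ξ μ)
    (hξ : Measurable ξ) (hmom : Integrable (fun ω => (∑ i, ξ ω i ^ 2) ^ 2) μ)
    {S : Matrix ι ι ℝ} (hS : S.IsHermitian) :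
    ∫ ω, (ξ ω ⬝ᵥ S *ᵥ ξ ω) ^ 2 ∂μ =
      (∫ ω, (∑ i, ξ ω i ^ 2) ^ 2 ∂μ) / (Fintype.card ι * (Fintype.card ι + 2)) *
        (2 * (S * S).trace + S.trace ^ 2) := by
  obtain ⟨k⟩ := ‹Nonempty ι›
  have hnorm := h.integral_sq_dotProduct_mulVec_self_eq hξ hmom isHermitian_one k
  simp only [one_mulVec, dotProduct, ← sq, one_pow, trace_one] at hnorm
  rw [h.integral_sq_dotProduct_mulVec_self_eq hξ hmom hS k, hnorm]
  field_simp
  ring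

end IsRotationInvariant

section Independence

variable {Ω : Type*} [MeasurableSpace Ω] {μ : Measure Ω}

omit [DecidableEq ι] in
theorem sq_dotProduct_mulVec_eq_sum (x y : ι → ℝ) (S : Matrix ι ι ℝ) :
    (x ⬝ᵥ S *ᵥ y) ^ 2 = ∑ a, ∑ c, ∑ b, ∑ d, S a b * S c d * (x a * x c * (y b * y d)) := by
  have hlin : x ⬝ᵥ S *ᵥ y = ∑ a, ∑ b, S a b * (x a * y b) := by
    simp only [dotProduct, mulVec, Finset.mul_sum]
    exact Finset.sum_congr rfl fun a _ => Finset.sum_congr rfl fun b _ => by ring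
  rw [hlin, sq, Finset.sum_mul_sum]
  refine Finset.sum_congr rfl fun a _ => Finset.sum_congr rfl fun c _ => ?_
  rw [Finset.sum_mul_sum]
  exact Finset.sum_congr rfl fun b _ => Finset.sum_congr rfl fun d _ => by ring

namespace ProbabilityTheory.IndepFun

variable {x y : Ω → ι → ℝ}

omit [Fintype ι] [DecidableEq ι] in
theorem mul_apply_mul_apply (hxy : IndepFun x y μ) (a c b d : ι) :
    IndepFun (fun ω => x ω a * x ω c) (fun ω => y ω b * y ω d) μ :=
  hxy.comp (φ := fun v : ι → ℝ => v a * v c) (ψ := fun v : ι → ℝ => v b * v d)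
    (by fun_prop) (by fun_prop)

omit [DecidableEq ι] in
theorem integrable_sq_dotProduct_mulVec (hxy : IndepFun x y μ)
    (hx : ∀ i j, Integrable (fun ω => x ω i * x ω j) μ)
    (hy : ∀ i j, Integrable (fun ω => y ω i * y ω j) μ) (S : Matrix ι ι ℝ) :
    Integrable (fun ω => (x ω ⬝ᵥ S *ᵥ y ω) ^ 2) μ := by
  simp only [sq_dotProduct_mulVec_eq_sum]
  exact integrable_finsetSum _ fun a _ => integrable_finsetSum _ fun c _ =>
    integrable_finsetSum _ fun b _ => integrable_finsetSum _ fun d _ =>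
      ((hxy.mul_apply_mul_apply a c b d).integrable_mul (hx a c) (hy b d)).const_mul _

theorem integral_sq_dotProduct_mulVec (hxy : IndepFun x y μ)
    (hx : ∀ i j, Integrable (fun ω => x ω i * x ω j) μ)
    (hy : ∀ i j, Integrable (fun ω => y ω i * y ω j) μ)
    (hxcov : ∀ i j, ∫ ω, x ω i * x ω j ∂μ = if i = j then 1 else 0)
    (hycov : ∀ i j, ∫ ω, y ω i * y ω j ∂μ = if i = j then 1 else 0) (S : Matrix ι ι ℝ) :
    ∫ ω, (x ω ⬝ᵥ S *ᵥ y ω) ^ 2 ∂μ = (S * Sᵀ).trace := by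
  have hint : ∀ a c b d, Integrable (fun ω => x ω a * x ω c * (y ω b * y ω d)) μ :=
    fun a c b d => (hxy.mul_apply_mul_apply a c b d).integrable_mul (hx a c) (hy b d)
  have hfactor : ∀ a c b d, ∫ ω, x ω a * x ω c * (y ω b * y ω d) ∂μ =
      (if a = c then 1 else 0) * (if b = d then 1 else 0) := fun a c b d => by
    rw [(hxy.mul_apply_mul_apply a c b d).integral_fun_mul_eq_mul_integral
      (hx a c).aestronglyMeasurable (hy b d).aestronglyMeasurable, hxcov, hycov]
  simp only [sq_dotProduct_mulVec_eq_sum]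
  simp only [integral_finsetSum _ fun a _ => integrable_finsetSum _ fun c _ =>
      integrable_finsetSum _ fun b _ => integrable_finsetSum _ fun d _ =>
        (hint a c b d).const_mul _,
    integral_finsetSum _ fun c _ => integrable_finsetSum _ fun b _ =>
      integrable_finsetSum _ fun d _ => (hint _ c b d).const_mul _,
    integral_finsetSum _ fun b _ => integrable_finsetSum _ fun d _ => (hint _ _ b d).const_mul _,
    integral_finsetSum _ fun d _ => (hint _ _ _ d).const_mul _, integral_const_mul]
  simp [hfactor, trace_mul_transpose_self, sq]

end ProbabilityTheory.IndepFun

theorem integral_sum_sum_sq_dotProduct_mulVec {κ : Type*} [Fintype κ] [DecidableEq κ]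
    {x : κ → Ω → ι → ℝ} {ξ : Ω → ι → ℝ} (hind : iIndepFun x μ)
    (hident : ∀ t, IdentDistrib (x t) ξ μ μ)
    (hξ2 : ∀ i j, Integrable (fun ω => ξ ω i * ξ ω j) μ)
    (hcov : ∀ i j, ∫ ω, ξ ω i * ξ ω j ∂μ = if i = j then 1 else 0)
    (S : Matrix ι ι ℝ) (hξS : Integrable (fun ω => (ξ ω ⬝ᵥ S *ᵥ ξ ω) ^ 2) μ) :
    ∫ ω, ∑ s, ∑ t, (x s ω ⬝ᵥ S *ᵥ x t ω) ^ 2 ∂μ =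
      Fintype.card κ * ∫ ω, (ξ ω ⬝ᵥ S *ᵥ ξ ω) ^ 2 ∂μ +
        (Fintype.card κ ^ 2 - Fintype.card κ) * (S * Sᵀ).trace := by
  set D := ∫ ω, (ξ ω ⬝ᵥ S *ᵥ ξ ω) ^ 2 ∂μ
  have hg2 : ∀ i j, Measurable fun v : ι → ℝ => v i * v j := by fun_prop
  have hgS : Measurable fun v : ι → ℝ => (v ⬝ᵥ S *ᵥ v) ^ 2 := by fun_prop
  have hx2 : ∀ t i j, Integrable (fun ω => x t ω i * x t ω j) μ := fun t i j =>
    ((hident t).comp (hg2 i j)).integrable_iff.2 (hξ2 i j)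
  have hxcov : ∀ t i j, ∫ ω, x t ω i * x t ω j ∂μ = if i = j then 1 else 0 := fun t i j =>
    ((hident t).comp (hg2 i j)).integral_eq.trans (hcov i j)
  have hterm : ∀ s t, Integrable (fun ω => (x s ω ⬝ᵥ S *ᵥ x t ω) ^ 2) μ ∧
      ∫ ω, (x s ω ⬝ᵥ S *ᵥ x t ω) ^ 2 ∂μ = if s = t then D else (S * Sᵀ).trace := by
    intro s t
    rcases eq_or_ne s t with rfl | hst
    · rw [if_pos rfl]
      exact ⟨((hident s).comp hgS).integrable_iff.2 hξS, ((hident s).comp hgS).integral_eq⟩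
    · rw [if_neg hst]
      have hxy := hind.indepFun hst
      exact ⟨hxy.integrable_sq_dotProduct_mulVec (hx2 s) (hx2 t) S,
        hxy.integral_sq_dotProduct_mulVec (hx2 s) (hx2 t) (hxcov s) (hxcov t) S⟩
  rw [integral_finsetSum _ fun s _ => integrable_finsetSum _ fun t _ => (hterm s t).1]
  simp only [integral_finsetSum _ fun t _ => (hterm _ t).1, (hterm _ _).2]
  have hsplit : ∀ s t : κ, (if s = t then D else (S * Sᵀ).trace) =
      (S * Sᵀ).trace + if s = t then D - (S * Sᵀ).trace else 0 := by
    intros; split_ifs <;> ring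
  simp only [hsplit, Finset.sum_add_distrib, Finset.sum_const, Finset.card_univ, nsmul_eq_mul,
    Finset.sum_ite_eq, Finset.mem_univ, ↓reduceIte]
  ring

end Independence

end

theorem stmt_5_general {Ω : Type*} [MeasurableSpace Ω] (μ : Measure Ω) [IsProbabilityMeasure μ]
    (n T : ℕ) (hn : 1 ≤ n) (hT : 1 ≤ T)
    (S R : Matrix (Fin n) (Fin n) ℝ)
    (hS : S.PosSemidef) (hRS : R * R = S)
    (ξ : Ω → Fin n → ℝ) (hξmeas : Measurable ξ)
    (hrot : ∀ O : Matrix (Fin n) (Fin n) ℝ, Oᵀ * O = 1 →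
      Measure.map (fun ω => O.mulVec (ξ ω)) μ = Measure.map ξ μ)
    (hcov : ∀ i j : Fin n, ∫ ω, ξ ω i * ξ ω j ∂μ = if i = j then (1 : ℝ) else 0)
    (hmom4 : Integrable (fun ω => (∑ i, ξ ω i ^ 2) ^ 2) μ)
    (X : Ω → Matrix (Fin n) (Fin T) ℝ)
    (hindep : iIndepFun
      (fun t ω => fun i => X ω i t) μ)
    (hident : ∀ t : Fin T, IdentDistrib (fun ω => fun i => X ω i t) ξ μ μ)
    (Ecov : Ω → Matrix (Fin n) (Fin n) ℝ)
    (hE : ∀ ω, Ecov ω = ((T : ℝ)⁻¹) • (R * X ω * (X ω)ᵀ * R))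
    (γ : ℝ) (hγ : γ = (∫ ω, (∑ i, ξ ω i ^ 2) ^ 2 ∂μ) / ((n : ℝ) * ((n : ℝ) + 2))) :
    ∫ ω, tau n (Ecov ω * Ecov ω) ∂μ =
      (((T : ℝ) - 1) / (T : ℝ) + 2 * γ / (T : ℝ)) * tau n (S * S) +
        ((n : ℝ) * γ / (T : ℝ)) * (tau n S) ^ 2 := by
  have hne : Nonempty (Fin n) := ⟨⟨0, hn⟩⟩
  have hST : Sᵀ = S := (conjTranspose_eq_transpose_of_trivial S).symm.trans hS.1
  have hτ : ∀ ω, tau n (Ecov ω * Ecov ω) = ((n : ℝ) * T ^ 2)⁻¹ *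
      ∑ s, ∑ t, ((fun i => X ω i s) ⬝ᵥ S *ᵥ fun i => X ω i t) ^ 2 := fun ω => by
    rw [tau, hE, smul_mul_smul, trace_smul, trace_sq_eq_sum_sq_dotProduct_mulVec hRS hST,
      smul_eq_mul]
    ring_nf
    rfl
  simp only [hτ]
  rw [integral_const_mul, integral_sum_sum_sq_dotProduct_mulVec hindep hident
      (integrable_mul_apply hξmeas hmom4) hcov S (integrable_sq_dotProduct_mulVec_self hξmeas hmom4 S),
    IsRotationInvariant.integral_sq_dotProduct_mulVec_self hrot hξmeas hmom4 hS.1]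
  simp only [Fintype.card_fin, ← hγ, hST, tau]
  have hT0 : (T : ℝ) ≠ 0 := Nat.cast_ne_zero.2 (by omega)
  field_simp
  ring

/-- Second tracial moment of the sample covariance `E = (1/T)·√Σ X Xᵀ √Σ` built from `T`
i.i.d. copies of a rotationally invariant noise vector `ξ` with `E[ξξᵀ] = I` and finite
fourth norm moment: `E[τ(E²)] = ((T−1)/T + 2γ/T)·τ(Σ²) + (nγ/T)·τ(Σ)²`, where
`γ = E[‖ξ‖⁴]/(n(n+2))`. -/
theorem stmt_5 {Ω : Type*} [MeasurableSpace Ω] (μ : Measure Ω) [IsProbabilityMeasure μ]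
    (n T : ℕ) (hn : 1 ≤ n) (hT : 1 ≤ T)
    (S R : Matrix (Fin n) (Fin n) ℝ)
    (hS : S.PosSemidef) (hR : R.PosSemidef) (hRS : R * R = S)
    (ξ : Ω → Fin n → ℝ) (hξmeas : Measurable ξ)
    (hrot : ∀ O : Matrix (Fin n) (Fin n) ℝ, Oᵀ * O = 1 →
      Measure.map (fun ω => O.mulVec (ξ ω)) μ = Measure.map ξ μ)
    (hcov : ∀ i j : Fin n, ∫ ω, ξ ω i * ξ ω j ∂μ = if i = j then (1 : ℝ) else 0)
    (hmom4 : Integrable (fun ω => (∑ i, ξ ω i ^ 2) ^ 2) μ)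
    (X : Ω → Matrix (Fin n) (Fin T) ℝ) (hXmeas : ∀ i t, Measurable fun ω => X ω i t)
    (hindep : iIndepFun
      (fun t ω => fun i => X ω i t) μ)
    (hident : ∀ t : Fin T, IdentDistrib (fun ω => fun i => X ω i t) ξ μ μ)
    (Ecov : Ω → Matrix (Fin n) (Fin n) ℝ)
    (hE : ∀ ω, Ecov ω = ((T : ℝ)⁻¹) • (R * X ω * (X ω)ᵀ * R))
    (γ : ℝ) (hγ : γ = (∫ ω, (∑ i, ξ ω i ^ 2) ^ 2 ∂μ) / ((n : ℝ) * ((n : ℝ) + 2))) :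
    ∫ ω, tau n (Ecov ω * Ecov ω) ∂μ =
      (((T : ℝ) - 1) / (T : ℝ) + 2 * γ / (T : ℝ)) * tau n (S * S) +
        ((n : ℝ) * γ / (T : ℝ)) * (tau n S) ^ 2 :=
  stmt_5_general μ n T hn hT S R hS hRS ξ hξmeas hrot hcov hmom4 X hindep hident Ecov hE γ hγ
end

section
/- Let n ≥ 1, t_out ≥ 1, let Σ be a deterministic symmetric positive semidefinite n×n matrix, and let E_out = (1/t_out)·√Σ X Xᵀ √Σ where the t_out columns of X are i.i.d. copies of a rotationally invariant random vector ξ in ℝⁿ with E[ξξᵀ] = Iₙ and E[‖ξ‖⁴] < ∞. Let V be a random n×n orthogonal matrix independent of X, and define the holdout estimator Ξᴴ = V · Diag(Vᵀ E_out V) · Vᵀ. Then E[τ(Ξᴴ Σ)] = E[τ(Diag(Vᵀ Σ V)²)]. -/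
/-!
Write `B = Vᵀ Σ V`. By cyclicity of the trace, `τ(Ξᴴ Σ) = (1/n) Σᵢ (Vᵀ E_out V)ᵢᵢ Bᵢᵢ` is
`1/(n t_out)` times a sum over the test columns `x` of the quadratic forms `xᵀ M(V) x`, with
`M(V) = √Σ V Diag(B) Vᵀ √Σ`. Since `V` is independent of `x` and `E[x xᵀ] = I`, each of them has
expectation `E[Tr M(V)] = E[Tr(Diag(B) B)] = E[Tr(Diag(B)²)]`.
-/

open MeasureTheory ProbabilityTheory Matrix

/-- `Diag(A)`: the diagonal matrix obtained from `A` by zeroing out off-diagonal entries. -/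
def diagPart (n : ℕ) (A : Matrix (Fin n) (Fin n) ℝ) : Matrix (Fin n) (Fin n) ℝ :=
  Matrix.diagonal A.diag

/-- Matrices carry the product measurable structure. -/
instance matrixMeasurableSpace {m k α : Type*} [MeasurableSpace α] :
    MeasurableSpace (Matrix m k α) :=
  inferInstanceAs (MeasurableSpace (m → k → α))

instance matrixBorelSpace {m k : Type*} [Countable m] [Countable k] :
    BorelSpace (Matrix m k ℝ) :=
  inferInstanceAs (BorelSpace (m → k → ℝ))

namespace Matrix

variable {ι κ α : Type*} [Fintype ι] [Fintype κ]

theorem trace_diagonal_mul [DecidableEq ι] [NonUnitalNonAssocSemiring α] (d : ι → α)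
    (B : Matrix ι ι α) :
    trace (diagonal d * B) = ∑ i, d i * B i i := by
  simp [trace, diagonal_mul]

theorem trace_diagonal_diag_mul_comm [DecidableEq ι] [CommSemiring α] (A B : Matrix ι ι α) :
    trace (diagonal A.diag * B) = trace (diagonal B.diag * A) := by
  simp only [trace_diagonal_mul, diag, mul_comm]

theorem trace_diagonal_diag_sq [DecidableEq ι] [Semiring α] (B : Matrix ι ι α) :
    trace (diagonal B.diag ^ 2) = trace (diagonal B.diag * B) := by
  rw [sq, diagonal_mul_diagonal, trace_diagonal, trace_diagonal_mul]
  rfl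

theorem trace_transpose_mul_mul [CommSemiring α] (X : Matrix ι κ α) (M : Matrix ι ι α) :
    trace (Xᵀ * M * X) = ∑ t, (fun i => X i t) ⬝ᵥ (M *ᵥ fun i => X i t) := by
  simp only [trace, diag, mul_apply, transpose_apply, dotProduct, mulVec, Finset.sum_mul,
    Finset.mul_sum]
  exact Finset.sum_congr rfl fun t _ => Finset.sum_comm.trans (Finset.sum_congr rfl fun _ _ =>
    Finset.sum_congr rfl fun _ _ => by ring)

theorem abs_apply_le_one_of_transpose_mul_self_eq_one [DecidableEq ι] {V : Matrix ι ι ℝ}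
    (hV : Vᵀ * V = 1) (i j : ι) : |V i j| ≤ 1 := by
  have hstar : star V * V = 1 := by
    rwa [star_eq_conjTranspose, conjTranspose_eq_transpose_of_trivial]
  exact entry_norm_bound_of_unitary (mem_unitaryGroup_iff'.mpr hstar) i j

end Matrix

section Holdout

variable {ι κ : Type*} [Fintype ι] [Fintype κ] [DecidableEq ι]

def holdoutKernel (R S V : Matrix ι ι ℝ) : Matrix ι ι ℝ :=
  R * V * diagonal (Vᵀ * S * V).diag * Vᵀ * R

theorem trace_holdout_mul (R S V : Matrix ι ι ℝ) (X : Matrix ι κ ℝ) :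
    trace (V * diagonal (Vᵀ * (R * X * Xᵀ * R) * V).diag * Vᵀ * S)
      = trace (Xᵀ * holdoutKernel R S V * X) := by
  set D := diagonal (Vᵀ * S * V).diag
  set D' := diagonal (Vᵀ * (R * X * Xᵀ * R) * V).diag
  calc trace (V * D' * Vᵀ * S)
      _ = trace (V * (D' * Vᵀ * S)) := by simp only [Matrix.mul_assoc]
      _ = trace ((D' * Vᵀ * S) * V) := trace_mul_comm _ _
      _ = trace (D * (Vᵀ * (R * X * Xᵀ * R) * V)) := by
        rw [← trace_diagonal_diag_mul_comm]; simp only [D', Matrix.mul_assoc]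
      _ = trace ((D * Vᵀ * R * X) * (Xᵀ * R * V)) := by simp only [Matrix.mul_assoc]
      _ = trace ((Xᵀ * R * V) * (D * Vᵀ * R * X)) := trace_mul_comm _ _
      _ = trace (Xᵀ * holdoutKernel R S V * X) := by
        simp only [holdoutKernel, D, Matrix.mul_assoc]

theorem trace_holdoutKernel {R S : Matrix ι ι ℝ} (hRS : R * R = S) (V : Matrix ι ι ℝ) :
    trace (holdoutKernel R S V) = trace (diagonal (Vᵀ * S * V).diag ^ 2) := by
  set D := diagonal (Vᵀ * S * V).diag
  calc trace (holdoutKernel R S V)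
      _ = trace (R * (V * D * Vᵀ * R)) := by simp only [holdoutKernel, D, Matrix.mul_assoc]
      _ = trace ((V * D * Vᵀ * R) * R) := trace_mul_comm _ _
      _ = trace (V * (D * Vᵀ * S)) := by simp only [← hRS, Matrix.mul_assoc]
      _ = trace ((D * Vᵀ * S) * V) := trace_mul_comm _ _
      _ = trace (D ^ 2) := by rw [trace_diagonal_diag_sq]; simp only [D, Matrix.mul_assoc]

theorem continuous_holdoutKernel (R S : Matrix ι ι ℝ) : Continuous (holdoutKernel R S) := by
  unfold holdoutKernel; fun_prop

end Holdout

section Probability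

variable {Ω ι κ : Type*} [MeasurableSpace Ω] {μ : Measure Ω}

-- The integral `1` cannot be a junk value, so it forces integrability of `x i ^ 2`.
theorem integrable_mul_of_integral_mul_self_eq_one {x : Ω → ι → ℝ} (hx : AEMeasurable x μ)
    (hsq : ∀ i, ∫ ω, x ω i * x ω i ∂μ = 1) (i j : ι) :
    Integrable (fun ω => x ω i * x ω j) μ := by
  have hL2 : ∀ k, MemLp (fun ω => x ω k) 2 μ := fun k =>
    (memLp_two_iff_integrable_sq
      ((measurable_pi_apply k).comp_aemeasurable hx).aestronglyMeasurable).mpr <| by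
        simpa [sq] using Integrable.of_integral_ne_zero (by simp [hsq k] : _ ≠ (0 : ℝ))
  exact (hL2 i).integrable_mul (hL2 j)

theorem Continuous.integrable_comp_of_abs_apply_le [IsFiniteMeasure μ]
    [Countable ι] [Countable κ] {f : Matrix ι κ ℝ → ℝ} (hf : Continuous f) {V : Ω → Matrix ι κ ℝ}
    (hV : AEMeasurable V μ) {C : ℝ} (hC : ∀ ω i j, |V ω i j| ≤ C) :
    Integrable (fun ω => f (V ω)) μ := by
  have hK : IsCompact (Set.univ.pi fun _ : ι => Set.univ.pi fun _ : κ => Set.Icc (-C) C) :=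
    isCompact_univ_pi fun _ => isCompact_univ_pi fun _ => isCompact_Icc
  obtain ⟨B, hB⟩ := hK.exists_bound_of_continuousOn hf.continuousOn
  refine .of_bound (hf.measurable.comp_aemeasurable hV).aestronglyMeasurable B
    (ae_of_all _ fun ω => hB _ ?_)
  exact Set.mem_univ_pi.mpr fun i => Set.mem_univ_pi.mpr fun j => abs_le.mp (hC ω i j)

theorem integral_dotProduct_mulVec_of_indepFun [IsProbabilityMeasure μ] [Fintype ι] [DecidableEq ι]
    {M : Ω → Matrix ι ι ℝ} {x : Ω → ι → ℝ} (hMx : IndepFun M x μ)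
    (hM : ∀ i j, Integrable (fun ω => M ω i j) μ)
    (hx : AEMeasurable x μ) (hcov : ∀ i j, ∫ ω, x ω i * x ω j ∂μ = if i = j then 1 else 0) :
    Integrable (fun ω => x ω ⬝ᵥ (M ω *ᵥ x ω)) μ ∧
      ∫ ω, x ω ⬝ᵥ (M ω *ᵥ x ω) ∂μ = ∫ ω, (M ω).trace ∂μ := by
  have hexpand : ∀ ω, x ω ⬝ᵥ (M ω *ᵥ x ω) = ∑ i, ∑ j, M ω i j * (x ω i * x ω j) := fun ω => by
    simp only [dotProduct, mulVec, Finset.mul_sum]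
    exact Finset.sum_congr rfl fun _ _ => Finset.sum_congr rfl fun _ _ => by ring
  have hx2 : ∀ i j, Integrable (fun ω => x ω i * x ω j) μ :=
    integrable_mul_of_integral_mul_self_eq_one hx fun i => by simp [hcov]
  have hindep : ∀ i j, IndepFun (fun ω => M ω i j) (fun ω => x ω i * x ω j) μ := fun i j =>
    hMx.comp ((measurable_pi_apply j).comp (measurable_pi_apply i))
      ((measurable_pi_apply i).mul (measurable_pi_apply j))
  have hterm : ∀ i j, Integrable (fun ω => M ω i j * (x ω i * x ω j)) μ := fun i j =>
    (hindep i j).integrable_mul (hM i j) (hx2 i j)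
  have hterm_integral : ∀ i j, ∫ ω, M ω i j * (x ω i * x ω j) ∂μ
      = (∫ ω, M ω i j ∂μ) * if i = j then 1 else 0 := fun i j => by
    rw [← hcov]
    exact (hindep i j).integral_fun_mul_eq_mul_integral (hM i j).1 (hx2 i j).1
  simp only [hexpand]
  refine ⟨integrable_finsetSum _ fun i _ => integrable_finsetSum _ fun j _ => hterm i j, ?_⟩
  calc ∫ ω, ∑ i, ∑ j, M ω i j * (x ω i * x ω j) ∂μ
      _ = ∑ i, ∑ j, ∫ ω, M ω i j * (x ω i * x ω j) ∂μ := by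
        rw [integral_finsetSum _ fun i _ => integrable_finsetSum _ fun j _ => hterm i j]
        exact Finset.sum_congr rfl fun i _ => integral_finsetSum _ fun j _ => hterm i j
      _ = ∑ i, ∫ ω, M ω i i ∂μ := by simp [hterm_integral]
      _ = ∫ ω, (M ω).trace ∂μ := (integral_finsetSum _ fun i _ => hM i i).symm

end Probability

theorem stmt_8_general {Ω : Type*} [MeasurableSpace Ω] (μ : Measure Ω) [IsProbabilityMeasure μ]
    (n tout : ℕ) (htout : 1 ≤ tout)
    (S R : Matrix (Fin n) (Fin n) ℝ)
    (hRS : R * R = S)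
    (ξ : Ω → Fin n → ℝ)
    (hcov : ∀ i j : Fin n, ∫ ω, ξ ω i * ξ ω j ∂μ = if i = j then (1 : ℝ) else 0)
    (X : Ω → Matrix (Fin n) (Fin tout) ℝ)
    (hident : ∀ t : Fin tout, IdentDistrib (fun ω => fun i => X ω i t) ξ μ μ)
    (Eout : Ω → Matrix (Fin n) (Fin n) ℝ)
    (hEout : ∀ ω, Eout ω = ((tout : ℝ)⁻¹) • (R * X ω * (X ω)ᵀ * R))
    (V : Ω → Matrix (Fin n) (Fin n) ℝ) (hVmeas : Measurable V)
    (hVorth : ∀ ω, (V ω)ᵀ * V ω = 1)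
    (hVX : IndepFun V X μ)
    (Xi : Ω → Matrix (Fin n) (Fin n) ℝ)
    (hXi : ∀ ω, Xi ω = V ω * diagPart n ((V ω)ᵀ * Eout ω * V ω) * (V ω)ᵀ) :
    ∫ ω, tau n ((Xi ω) * S) ∂μ =
      ∫ ω, tau n ((diagPart n ((V ω)ᵀ * S * V ω)) ^ 2) ∂μ := by
  set M := fun ω => holdoutKernel R S (V ω)
  set q := fun (t : Fin tout) ω => (fun i => X ω i t) ⬝ᵥ (M ω *ᵥ fun i => X ω i t)
  have hM : ∀ i j, Integrable (fun ω => M ω i j) μ := fun i j =>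
    ((continuous_holdoutKernel R S).matrix_elem i j).integrable_comp_of_abs_apply_le
      hVmeas.aemeasurable fun ω => abs_apply_le_one_of_transpose_mul_self_eq_one (hVorth ω)
  have hcol : ∀ t, Integrable (q t) μ ∧ ∫ ω, q t ω ∂μ = ∫ ω, (M ω).trace ∂μ := fun t =>
    integral_dotProduct_mulVec_of_indepFun
      (hVX.comp (continuous_holdoutKernel R S).measurable
        (measurable_pi_lambda _ fun i => (measurable_pi_apply t).comp (measurable_pi_apply i)))
      hM (hident t).aemeasurable_fst
      fun i j => ((hident t).comp ((measurable_pi_apply i).mul (measurable_pi_apply j))).integral_eq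
        |>.trans (hcov i j)
  have hpt : ∀ ω, tau n (Xi ω * S) = (n : ℝ)⁻¹ * ((tout : ℝ)⁻¹ * ∑ t, q t ω) := by
    intro ω
    simp only [tau, hXi, hEout, diagPart, Matrix.mul_smul, Matrix.smul_mul, diag_smul,
      diagonal_smul, trace_smul, smul_eq_mul, trace_holdout_mul, trace_transpose_mul_mul, one_div]
    rfl
  calc ∫ ω, tau n (Xi ω * S) ∂μ
      _ = (n : ℝ)⁻¹ * ((tout : ℝ)⁻¹ * ∑ t, ∫ ω, q t ω ∂μ) := by
        simp only [hpt, integral_const_mul, integral_finsetSum _ fun t _ => (hcol t).1]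
      _ = (n : ℝ)⁻¹ * ∫ ω, (M ω).trace ∂μ := by
        have htout' : (tout : ℝ) ≠ 0 := Nat.cast_ne_zero.mpr (by omega)
        simp only [fun t => (hcol t).2, Finset.sum_const, Finset.card_univ, Fintype.card_fin,
          nsmul_eq_mul, inv_mul_cancel_left₀ htout']
      _ = ∫ ω, tau n ((diagPart n ((V ω)ᵀ * S * V ω)) ^ 2) ∂μ := by
        simp only [tau, M, trace_holdoutKernel hRS, diagPart, integral_const_mul, one_div]

/-- For the test-set sample covariance `E_out = (1/t_out)·√Σ X Xᵀ √Σ` built from rotationally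
invariant noise, and a random orthogonal matrix `V` independent of the test noise:
the holdout estimator `Ξᴴ = V·Diag(Vᵀ E_out V)·Vᵀ` satisfies
`E[τ(Ξᴴ Σ)] = E[τ(Diag(Vᵀ Σ V)²)]`. -/
theorem stmt_8 {Ω : Type*} [MeasurableSpace Ω] (μ : Measure Ω) [IsProbabilityMeasure μ]
    (n tout : ℕ) (hn : 1 ≤ n) (htout : 1 ≤ tout)
    (S R : Matrix (Fin n) (Fin n) ℝ)
    (hS : S.PosSemidef) (hR : R.PosSemidef) (hRS : R * R = S)
    (ξ : Ω → Fin n → ℝ) (hξmeas : Measurable ξ)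
    (hrot : ∀ O : Matrix (Fin n) (Fin n) ℝ, Oᵀ * O = 1 →
      Measure.map (fun ω => O.mulVec (ξ ω)) μ = Measure.map ξ μ)
    (hcov : ∀ i j : Fin n, ∫ ω, ξ ω i * ξ ω j ∂μ = if i = j then (1 : ℝ) else 0)
    (hmom4 : Integrable (fun ω => (∑ i, ξ ω i ^ 2) ^ 2) μ)
    (X : Ω → Matrix (Fin n) (Fin tout) ℝ) (hXmeas : Measurable X)
    (hindep : iIndepFun
      (fun t ω => fun i => X ω i t) μ)
    (hident : ∀ t : Fin tout, IdentDistrib (fun ω => fun i => X ω i t) ξ μ μ)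
    (Eout : Ω → Matrix (Fin n) (Fin n) ℝ)
    (hEout : ∀ ω, Eout ω = ((tout : ℝ)⁻¹) • (R * X ω * (X ω)ᵀ * R))
    (V : Ω → Matrix (Fin n) (Fin n) ℝ) (hVmeas : Measurable V)
    (hVorth : ∀ ω, (V ω)ᵀ * V ω = 1)
    (hVX : IndepFun V X μ)
    (γ : ℝ) (hγ : γ = (∫ ω, (∑ i, ξ ω i ^ 2) ^ 2 ∂μ) / ((n : ℝ) * ((n : ℝ) + 2)))
    (Xi : Ω → Matrix (Fin n) (Fin n) ℝ)
    (hXi : ∀ ω, Xi ω = V ω * diagPart n ((V ω)ᵀ * Eout ω * V ω) * (V ω)ᵀ) :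
    ∫ ω, tau n ((Xi ω) * S) ∂μ =
      ∫ ω, tau n ((diagPart n ((V ω)ᵀ * S * V ω)) ^ 2) ∂μ :=
  stmt_8_general μ n tout htout S R hRS ξ hcov X hident Eout hEout V hVmeas hVorth hVX Xi hXi
end

section
/- Let n ≥ 1 and let E and Σ be random symmetric n×n real matrices (defined on a common probability space, with all the traces below integrable) satisfying E[τ(E)] = E[τ(Σ)] = 1, E[τ(EΣ)] = E[τ(Σ²)], and E[τ(E²)] > 1. Then the function r ↦ E[τ((rE + (1−r)Iₙ − Σ)²)] on ℝ attains its unique minimum at r* = (E[τ(Σ²)] − 1)/(E[τ(E²)] − 1). -/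
open MeasureTheory Matrix

/-! Writing `rE + (1 - r)I - Σ = r(E - I) + (I - Σ)` turns the risk into a quadratic
`a r² + 2 b r + c` with `a = E[τ(E²)] - 1 > 0` and, by the moment conditions,
`b = 1 - E[τ(Σ²)]`; such a quadratic equals `a (r - r*)² + const` with `a r* = -b`. -/

section Tau

variable {n : ℕ}

lemma tau_add (A B : Matrix (Fin n) (Fin n) ℝ) : tau n (A + B) = tau n A + tau n B := by
  simp only [tau, trace_add, mul_add]

lemma tau_sub (A B : Matrix (Fin n) (Fin n) ℝ) : tau n (A - B) = tau n A - tau n B := by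
  simp only [tau, trace_sub, mul_sub]

lemma tau_smul (r : ℝ) (A : Matrix (Fin n) (Fin n) ℝ) : tau n (r • A) = r * tau n A := by
  simp only [tau, trace_smul, smul_eq_mul]
  ring

lemma tau_one (hn : n ≠ 0) : tau n (1 : Matrix (Fin n) (Fin n) ℝ) = 1 := by
  simp [tau, hn]

lemma tau_mul_comm (A B : Matrix (Fin n) (Fin n) ℝ) : tau n (A * B) = tau n (B * A) := by
  rw [tau, tau, trace_mul_comm]

lemma tau_smul_add_sq (r : ℝ) (A B : Matrix (Fin n) (Fin n) ℝ) :
    tau n ((r • A + B) ^ 2) = r ^ 2 * tau n (A * A) + 2 * r * tau n (A * B) + tau n (B * B) := by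
  simp only [sq, add_mul, mul_add, Matrix.smul_mul, Matrix.mul_smul, tau_add, tau_smul,
    tau_mul_comm B A]
  ring

lemma tau_sub_one_mul_sub_one (hn : n ≠ 0) (A : Matrix (Fin n) (Fin n) ℝ) :
    tau n ((A - 1) * (A - 1)) = tau n (A * A) - 2 * tau n A + 1 := by
  simp only [sub_mul, mul_sub, mul_one, one_mul, tau_sub, tau_one hn]
  ring

lemma tau_sub_one_mul_one_sub (hn : n ≠ 0) (A B : Matrix (Fin n) (Fin n) ℝ) :
    tau n ((A - 1) * (1 - B)) = tau n A - tau n (A * B) - 1 + tau n B := by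
  simp only [sub_mul, mul_sub, mul_one, one_mul, tau_sub, tau_one hn]
  ring

lemma tau_one_sub_mul_one_sub (hn : n ≠ 0) (B : Matrix (Fin n) (Fin n) ℝ) :
    tau n ((1 - B) * (1 - B)) = 1 - 2 * tau n B + tau n (B * B) := by
  simp only [sub_mul, mul_sub, mul_one, one_mul, tau_sub, tau_one hn]
  ring

end Tau

lemma shrink_eq_smul_sub_one_add {R M : Type*} [CommRing R] [AddCommGroup M] [Module R M]
    (r : R) (e i s : M) : r • e + (1 - r) • i - s = r • (e - i) + (i - s) := by
  rw [smul_sub, sub_smul, one_smul]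
  abel

lemma quadratic_lt_of_ne {a b c x r : ℝ} (ha : 0 < a) (hx : a * x = -b) (hr : r ≠ x) :
    a * x ^ 2 + 2 * b * x + c < a * r ^ 2 + 2 * b * r + c := by
  have hsq : 0 < (r - x) ^ 2 := by positivity [sub_ne_zero.2 hr]
  have hdiff : a * r ^ 2 + 2 * b * r + c - (a * x ^ 2 + 2 * b * x + c) = a * (r - x) ^ 2 := by
    linear_combination (2 * (r - x)) * hx
  nlinarith [mul_pos ha hsq]

lemma integral_quadratic {Ω : Type*} [MeasurableSpace Ω] {μ : Measure Ω} {X Y Z : Ω → ℝ}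
    (hX : Integrable X μ) (hY : Integrable Y μ) (hZ : Integrable Z μ) (r : ℝ) :
    ∫ ω, r ^ 2 * X ω + 2 * r * Y ω + Z ω ∂μ =
      r ^ 2 * ∫ ω, X ω ∂μ + 2 * r * ∫ ω, Y ω ∂μ + ∫ ω, Z ω ∂μ := by
  rw [integral_add (by fun_prop) hZ, integral_add (by fun_prop) (by fun_prop),
    integral_const_mul, integral_const_mul]

theorem stmt_11_general {Ω : Type*} [MeasurableSpace Ω] (μ : Measure Ω) [IsProbabilityMeasure μ]
    (n : ℕ) (hn : 1 ≤ n)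
    (E S : Ω → Matrix (Fin n) (Fin n) ℝ)
    (hIntE : Integrable (fun ω => tau n (E ω)) μ)
    (hIntS : Integrable (fun ω => tau n (S ω)) μ)
    (hIntE2 : Integrable (fun ω => tau n (E ω * E ω)) μ)
    (hIntS2 : Integrable (fun ω => tau n (S ω * S ω)) μ)
    (hIntES : Integrable (fun ω => tau n (E ω * S ω)) μ)
    (hE1 : ∫ ω, tau n (E ω) ∂μ = 1) (hS1 : ∫ ω, tau n (S ω) ∂μ = 1)
    (hES : ∫ ω, tau n (E ω * S ω) ∂μ = ∫ ω, tau n (S ω * S ω) ∂μ)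
    (hE2 : 1 < ∫ ω, tau n (E ω * E ω) ∂μ)
    (rstar : ℝ)
    (hrstar : rstar =
      ((∫ ω, tau n (S ω * S ω) ∂μ) - 1) / ((∫ ω, tau n (E ω * E ω) ∂μ) - 1)) :
    ∀ r : ℝ, r ≠ rstar →
      ∫ ω, tau n ((rstar • E ω + (1 - rstar) • (1 : Matrix (Fin n) (Fin n) ℝ) - S ω) ^ 2) ∂μ <
        ∫ ω, tau n ((r • E ω + (1 - r) • (1 : Matrix (Fin n) (Fin n) ℝ) - S ω) ^ 2) ∂μ := by
  intro r hr
  have hn0 : n ≠ 0 := Nat.one_le_iff_ne_zero.mp hn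
  have hrisk (t : ℝ) :
      ∫ ω, tau n ((t • E ω + (1 - t) • (1 : Matrix (Fin n) (Fin n) ℝ) - S ω) ^ 2) ∂μ =
        (∫ ω, tau n (E ω * E ω) ∂μ - 1) * t ^ 2 + 2 * (1 - ∫ ω, tau n (S ω * S ω) ∂μ) * t
          + ∫ ω, 1 - 2 * tau n (S ω) + tau n (S ω * S ω) ∂μ := by
    simp_rw [shrink_eq_smul_sub_one_add, tau_smul_add_sq, tau_sub_one_mul_sub_one hn0,
      tau_sub_one_mul_one_sub hn0, tau_one_sub_mul_one_sub hn0]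
    rw [integral_quadratic (by fun_prop) (by fun_prop) (by fun_prop)]
    simp (disch := fun_prop) only [integral_add, integral_sub, integral_const_mul, integral_const,
      probReal_univ, smul_eq_mul, one_mul, hE1, hS1, hES]
    ring
  rw [hrisk, hrisk]
  refine quadratic_lt_of_ne ?_ ?_ hr
  · linarith
  rw [hrstar]
  field_simp [(by linarith : (∫ ω, tau n (E ω * E ω) ∂μ) - 1 ≠ 0)]
  ring

/-- Optimal linear shrinkage: for random symmetric matrices `E, Σ` with integrable traces,
`E[τ(E)] = E[τ(Σ)] = 1`, `E[τ(EΣ)] = E[τ(Σ²)]` and `E[τ(E²)] > 1`, the function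
`r ↦ E[τ((rE + (1−r)I − Σ)²)]` attains its unique minimum at
`r* = (E[τ(Σ²)] − 1)/(E[τ(E²)] − 1)`. -/
theorem stmt_11 {Ω : Type*} [MeasurableSpace Ω] (μ : Measure Ω) [IsProbabilityMeasure μ]
    (n : ℕ) (hn : 1 ≤ n)
    (E S : Ω → Matrix (Fin n) (Fin n) ℝ)
    (hEsymm : ∀ ω, (E ω).IsSymm) (hSsymm : ∀ ω, (S ω).IsSymm)
    (hIntE : Integrable (fun ω => tau n (E ω)) μ)
    (hIntS : Integrable (fun ω => tau n (S ω)) μ)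
    (hIntE2 : Integrable (fun ω => tau n (E ω * E ω)) μ)
    (hIntS2 : Integrable (fun ω => tau n (S ω * S ω)) μ)
    (hIntES : Integrable (fun ω => tau n (E ω * S ω)) μ)
    (hE1 : ∫ ω, tau n (E ω) ∂μ = 1) (hS1 : ∫ ω, tau n (S ω) ∂μ = 1)
    (hES : ∫ ω, tau n (E ω * S ω) ∂μ = ∫ ω, tau n (S ω * S ω) ∂μ)
    (hE2 : 1 < ∫ ω, tau n (E ω * E ω) ∂μ)
    (rstar : ℝ)
    (hrstar : rstar =
      ((∫ ω, tau n (S ω * S ω) ∂μ) - 1) / ((∫ ω, tau n (E ω * E ω) ∂μ) - 1)) :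
    ∀ r : ℝ, r ≠ rstar →
      ∫ ω, tau n ((rstar • E ω + (1 - rstar) • (1 : Matrix (Fin n) (Fin n) ℝ) - S ω) ^ 2) ∂μ <
        ∫ ω, tau n ((r • E ω + (1 - r) • (1 : Matrix (Fin n) (Fin n) ℝ) - S ω) ^ 2) ∂μ :=
  stmt_11_general μ n hn E S hIntE hIntS hIntE2 hIntS2 hIntES hE1 hS1 hES hE2 rstar hrstar
end
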